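/- For every integer k ≥ 1, the exponential generating function of the Bernoulli–Stirling numbers of the second kind satisfies, as an identity of formal power series with rational coefficients, (Σ_{n≥0} B_{n,k} x^n/n!) · (exp(kx) - 1) = (1/k!) · (exp(x) - 1)^k · kx; equivalently Σ_{n≥0} B_{n,k} x^n/n! = ((exp(x)-1)^k/k!) · (kx/(exp(kx)-1)). -/

import Mathlib

/-!
The exponential generating function of `n ↦ S(n, k)` is `(exp x - 1)^k / k!`: by the recurrence
of `S`, the series for `k + 1` and `(exp x - 1)^(k+1) / (k+1)!` both solve `f' = (k + 1) f + g`,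
with `g` the series for `k`, and have constant term `0`, which pins down `f`. The sum defining
`B_{n,k}` is a binomial convolution of `k^h B_h` with `S(·, k)`, so its exponential generating
function is `k x / (exp (k x) - 1)` times `(exp x - 1)^k / k!`.
-/

/-- Stirling numbers of the second kind (partition Stirling numbers). -/
def stirling2 : ℕ → ℕ → ℕ
  | 0, 0 => 1
  | 0, _ + 1 => 0
  | _ + 1, 0 => 0
  | n + 1, k + 1 => (k + 1) * stirling2 n (k + 1) + stirling2 n k

/-- Bernoulli–Stirling numbers of the second kind. -/
def bsB (n k : ℕ) : ℚ :=
  ∑ h ∈ Finset.range (n + 1),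
    bernoulli h * (n.choose h) * stirling2 (n - h) k * (k : ℚ) ^ h

open PowerSeries

namespace PowerSeries

theorem eq_zero_of_derivative_eq_C_mul {R : Type*} [CommRing R] [IsAddTorsionFree R] {c : R}
    {f : R⟦X⟧} (hd : d⁄dX R f = C c * f) (h0 : constantCoeff f = 0) : f = 0 := by
  ext n
  rw [map_zero]
  induction n with
  | zero => simpa using h0
  | succ n ih =>
    have h := congrArg (coeff n) hd
    rw [coeff_derivative, coeff_C_mul, ih, mul_zero, mul_comm, ← Nat.cast_succ,
      ← nsmul_eq_mul] at h
    simpa using (nsmul_eq_zero_iff_right n.succ_ne_zero).mp h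

theorem mk_div_factorial_mul_mk_div_factorial {K : Type*} [Field K] [CharZero K]
    (a b : ℕ → K) :
    (mk fun n => a n / n.factorial) * (mk fun n => b n / n.factorial) =
      mk fun n => (∑ h ∈ Finset.range (n + 1), n.choose h * a h * b (n - h)) / n.factorial := by
  ext n
  rw [coeff_mul, Finset.Nat.sum_antidiagonal_eq_sum_range_succ
    (fun i j => coeff i (mk fun n => a n / n.factorial) * coeff j (mk fun n => b n / n.factorial)),
    coeff_mk, Finset.sum_div]
  refine Finset.sum_congr rfl fun h hh => ?_
  have hn := n.factorial_ne_zero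
  rw [coeff_mk, coeff_mk, Nat.cast_choose K (Finset.mem_range_succ_iff.mp hh)]
  field_simp

theorem derivative_C_mul {R : Type*} [CommRing R] (a : R) (f : R⟦X⟧) :
    d⁄dX R (C a * f) = C a * d⁄dX R f := by
  rw [← smul_eq_C_mul, Derivation.map_smul, smul_eq_C_mul]

theorem derivative_exp_sub_one_pow_succ (A : Type*) [CommRing A] [Algebra ℚ A] (k : ℕ) :
    d⁄dX A ((exp A - 1) ^ (k + 1)) =
      ((k + 1 : ℕ) : A⟦X⟧) * ((exp A - 1) ^ (k + 1) + (exp A - 1) ^ k) := by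
  rw [derivative_pow, map_sub, derivative_exp, derivative_one, sub_zero, Nat.add_sub_cancel]
  ring

end PowerSeries

theorem derivative_mk_stirling2_succ_div_factorial (k : ℕ) :
    d⁄dX ℚ (mk fun n => (stirling2 n (k + 1) : ℚ) / n.factorial) =
      C ((k + 1 : ℕ) : ℚ) * (mk fun n => (stirling2 n (k + 1) : ℚ) / n.factorial) +
        mk fun n => (stirling2 n k : ℚ) / n.factorial := by
  ext n
  rw [coeff_derivative, map_add, coeff_C_mul, coeff_mk, coeff_mk, coeff_mk,
    stirling2, Nat.factorial_succ]
  push_cast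
  field_simp

theorem mk_stirling2_div_factorial (k : ℕ) :
    (mk fun n => (stirling2 n k : ℚ) / n.factorial) =
      C (1 / k.factorial : ℚ) * (exp ℚ - 1) ^ k := by
  induction k with
  | zero =>
    ext (_ | n) <;> simp [stirling2]
  | succ k ih =>
    have hC : C (1 / (k + 1).factorial : ℚ) * C ((k + 1 : ℕ) : ℚ) = C (1 / k.factorial : ℚ) := by
      rw [← map_mul, Nat.factorial_succ]
      push_cast
      field_simp
    refine sub_eq_zero.mp (eq_zero_of_derivative_eq_C_mul (c := ((k + 1 : ℕ) : ℚ)) ?_ ?_)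
    · rw [map_sub, derivative_mk_stirling2_succ_div_factorial, ih, derivative_C_mul,
        derivative_exp_sub_one_pow_succ, ← map_natCast C]
      linear_combination -(exp ℚ - 1) ^ k * hC
    · simp [stirling2]

theorem mk_bsB_div_factorial (k : ℕ) :
    (mk fun n => bsB n k / n.factorial) =
      rescale (k : ℚ) (bernoulliPowerSeries ℚ) *
        mk fun n => (stirling2 n k : ℚ) / n.factorial := by
  rw [bernoulliPowerSeries, rescale_mk]
  simp only [Algebra.algebraMap_self, RingHom.id_apply, ← mul_div_assoc]
  rw [mk_div_factorial_mul_mk_div_factorial]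
  congr! 3 with n
  exact Finset.sum_congr rfl fun h _ => by ring

theorem bsB_exponential_generating_function_general (k : ℕ) :
    (PowerSeries.mk fun n => bsB n k / n.factorial : PowerSeries ℚ) *
        (PowerSeries.rescale (k : ℚ) (PowerSeries.exp ℚ) - 1) =
      PowerSeries.C (R := ℚ) (1 / k.factorial) * (PowerSeries.exp ℚ - 1) ^ k *
        (PowerSeries.C (R := ℚ) (k : ℚ) * PowerSeries.X) := by
  calc _ = rescale (k : ℚ) (bernoulliPowerSeries ℚ * (exp ℚ - 1)) *
          (C (1 / k.factorial : ℚ) * (exp ℚ - 1) ^ k) := by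
        rw [mk_bsB_div_factorial, mk_stirling2_div_factorial, map_mul, map_sub (rescale _), map_one]
        ring
    _ = _ := by
        rw [bernoulliPowerSeries_mul_exp_sub_one, rescale_X]
        ring

theorem bsB_exponential_generating_function (k : ℕ) (hk : 1 ≤ k) :
    (PowerSeries.mk fun n => bsB n k / n.factorial : PowerSeries ℚ) *
        (PowerSeries.rescale (k : ℚ) (PowerSeries.exp ℚ) - 1) =
      PowerSeries.C (R := ℚ) (1 / k.factorial) * (PowerSeries.exp ℚ - 1) ^ k *
        (PowerSeries.C (R := ℚ) (k : ℚ) * PowerSeries.X) :=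
  bsB_exponential_generating_function_general k
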